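/- Let ξ : ℤ → {0,1} be a recurrent bi-infinite word that is not periodic. Then no factor of ξ is right-determining: for every u ∈ F(ξ) there exist k ∈ ℕ and two distinct words v, v' ∈ {0,1}^k with uv ∈ F(ξ) and uv' ∈ F(ξ). -/

import Mathlib

/-- `u` occurs in the bi-infinite word `ξ` starting at position `i`. -/
def FactorAt (ξ : ℤ → Bool) (u : List Bool) (i : ℤ) : Prop :=
  ∀ k : ℕ, k < u.length → u.getD k false = ξ (i + k)

/-- The set of finite factors of the bi-infinite word `ξ`. -/
def Factors (ξ : ℤ → Bool) : Set (List Bool) :=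
  {u | ∃ i : ℤ, FactorAt ξ u i}

/-- `ξ` is recurrent: every factor occurs entirely within `(-∞,i]` and within `[i,∞)`
for every `i`. -/
def Recurrent (ξ : ℤ → Bool) : Prop :=
  ∀ u ∈ Factors ξ, ∀ i : ℤ,
    (∃ j : ℤ, j + u.length ≤ i ∧ FactorAt ξ u j) ∧
    (∃ j : ℤ, i ≤ j ∧ FactorAt ξ u j)

/-- `ξ` is periodic. -/
def BiPeriodic (ξ : ℤ → Bool) : Prop :=
  ∃ p : ℤ, 0 < p ∧ ∀ n : ℤ, ξ n = ξ (n + p)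

/-- `u` is right-determining in `F(ξ)`: for every `k` there is exactly one `v` of
length `k` with `u ++ v ∈ F(ξ)`. -/
def RightDet (ξ : ℤ → Bool) (u : List Bool) : Prop :=
  ∀ k : ℕ, ∃! v : List Bool, v.length = k ∧ u ++ v ∈ Factors ξ

/-- `u` is left-determining in `F(ξ)`. -/
def LeftDet (ξ : ℤ → Bool) (u : List Bool) : Prop :=
  ∀ k : ℕ, ∃! v : List Bool, v.length = k ∧ v ++ u ∈ Factors ξ

/-!
If a factor `u` is right-determining, then any two occurrences of `u`, at `i` and `i + p`, are
followed by the same infinite word, so `ξ` is `p`-periodic on `[i + |u|, ∞)`. Recurrence moves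
every window `ξ(n) ⋯ ξ(n + p)` into that half-line, so `ξ` is `p`-periodic everywhere.
-/

def window (ξ : ℤ → Bool) (n : ℤ) (L : ℕ) : List Bool :=
  List.ofFn fun k : Fin L => ξ (n + k)

@[simp]
lemma length_window (ξ : ℤ → Bool) (n : ℤ) (L : ℕ) : (window ξ n L).length = L :=
  List.length_ofFn

lemma factorAt_window (ξ : ℤ → Bool) (n : ℤ) (L : ℕ) : FactorAt ξ (window ξ n L) n := by
  intro k hk
  rw [List.getD_eq_getElem _ _ hk]
  simp [window]

lemma window_mem_factors (ξ : ℤ → Bool) (n : ℤ) (L : ℕ) : window ξ n L ∈ Factors ξ :=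
  ⟨n, factorAt_window ξ n L⟩

namespace FactorAt

variable {ξ : ℤ → Bool}

lemma apply_eq {u : List Bool} {i j : ℤ} (hi : FactorAt ξ u i) (hj : FactorAt ξ u j) {k : ℕ}
    (hk : k < u.length) : ξ (i + k) = ξ (j + k) :=
  (hi k hk).symm.trans (hj k hk)

lemma append {u v : List Bool} {i : ℤ} (hu : FactorAt ξ u i) (hv : FactorAt ξ v (i + u.length)) :
    FactorAt ξ (u ++ v) i := by
  intro k hk
  rw [List.length_append] at hk
  rw [List.getD_eq_getElem _ _ (by simpa using hk)]
  rcases lt_or_ge k u.length with h | h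
  · rw [List.getElem_append_left h, ← List.getD_eq_getElem _ false h]
    exact hu k h
  · have hk' : k - u.length < v.length := by omega
    rw [List.getElem_append_right h, ← List.getD_eq_getElem _ false hk', hv _ hk']
    congr 1
    omega

end FactorAt

lemma rightDet_of_extensions_eq {ξ : ℤ → Bool} {u : List Bool} (hu : u ∈ Factors ξ)
    (h : ∀ v v' : List Bool, v.length = v'.length →
      u ++ v ∈ Factors ξ → u ++ v' ∈ Factors ξ → v = v') :
    RightDet ξ u := by
  obtain ⟨i, hi⟩ := hu
  intro k
  refine ⟨window ξ (i + u.length) k, ⟨length_window .., i, hi.append (factorAt_window _ _ _)⟩, ?_⟩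
  rintro v ⟨hv, hmem⟩
  exact h v _ (by simp [hv]) hmem ⟨i, hi.append (factorAt_window _ _ _)⟩

lemma RightDet.apply_add_eq {ξ : ℤ → Bool} {u : List Bool} (hdet : RightDet ξ u) {i : ℤ} {p : ℕ}
    (hi : FactorAt ξ u i) (hip : FactorAt ξ u (i + p)) {m : ℤ} (hm : i + u.length ≤ m) :
    ξ m = ξ (m + p) := by
  obtain ⟨n, rfl⟩ : ∃ n : ℕ, m = i + u.length + n := ⟨(m - (i + u.length)).toNat, by omega⟩
  have hext : window ξ (i + u.length) (n + 1) = window ξ (i + p + u.length) (n + 1) :=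
    (hdet (n + 1)).unique ⟨length_window .., i, hi.append (factorAt_window _ _ _)⟩
      ⟨length_window .., _, hip.append (factorAt_window _ _ _)⟩
  have hshift := (factorAt_window ξ (i + u.length) (n + 1)).apply_eq
    (hext ▸ factorAt_window ξ (i + p + u.length) (n + 1)) (k := n) (by simp)
  convert hshift using 2
  omega

lemma Recurrent.apply_add_eq_of_forall_ge {ξ : ℤ → Bool} (hrec : Recurrent ξ) {N : ℤ} {p : ℕ}
    (h : ∀ m, N ≤ m → ξ m = ξ (m + p)) (n : ℤ) : ξ n = ξ (n + p) := by
  obtain ⟨-, j, hj, hocc⟩ := hrec _ (window_mem_factors ξ n (p + 1)) N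
  have h₀ := (factorAt_window ξ n (p + 1)).apply_eq hocc (k := 0) (by simp)
  have hp := (factorAt_window ξ n (p + 1)).apply_eq hocc (k := p) (by simp)
  simp only [Nat.cast_zero, add_zero] at h₀
  rw [h₀, hp, h j hj]

lemma Recurrent.not_rightDet {ξ : ℤ → Bool} (hrec : Recurrent ξ) (hnp : ¬ BiPeriodic ξ)
    {u : List Bool} (hu : u ∈ Factors ξ) : ¬ RightDet ξ u := by
  intro hdet
  obtain ⟨i, hi⟩ := hu
  obtain ⟨-, j, hij, hj⟩ := hrec u ⟨i, hi⟩ (i + 1)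
  obtain ⟨p, rfl⟩ : ∃ p : ℕ, j = i + p := ⟨(j - i).toNat, by omega⟩
  exact hnp ⟨p, by omega, hrec.apply_add_eq_of_forall_ge fun m hm => hdet.apply_add_eq hi hj hm⟩

theorem no_right_determining_factor (ξ : ℤ → Bool) (hrec : Recurrent ξ)
    (hnp : ¬ BiPeriodic ξ) :
    ∀ u ∈ Factors ξ, ∃ (k : ℕ) (v v' : List Bool),
      v ≠ v' ∧ v.length = k ∧ v'.length = k ∧
      u ++ v ∈ Factors ξ ∧ u ++ v' ∈ Factors ξ := by
  intro u hu
  by_contra hcon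
  push Not at hcon
  refine hrec.not_rightDet hnp hu (rightDet_of_extensions_eq hu fun v v' hlen hv hv' => ?_)
  by_contra hne
  exact hcon _ v v' hne rfl hlen.symm hv hv'
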